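/- Let D be an edge set with u,v connected in G−D, and let e = (x,y) be a tree edge of T_u with x the parent of y, such that π(u,y) contains no edge of D and some vertex of T_u(y) is incident to an edge of D. Suppose P = π_{G−D}(u,v) traverses e. Then the maximal prefix of P all of whose edges lie in T_induced is nonempty, and its last edge e_Δ is either e itself or an edge of T_u both of whose endpoints belong to T_u(y). -/

import Mathlib

open SimpleGraph

variable {V : Type*}

/-- Total weight of a walk with respect to edge weights `w`. -/
def walkWeight (w : Sym2 V → ℝ) {G : SimpleGraph V} {a b : V} (p : G.Walk a b) : ℝ :=
  (p.edges.map w).sum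

/-- `p` is the/a minimum-weight path from `a` to `b` in `G`. -/
def IsShortestPath (w : Sym2 V → ℝ) (G : SimpleGraph V) {a b : V} (p : G.Walk a b) : Prop :=
  p.IsPath ∧ ∀ q : G.Walk a b, q.IsPath → walkWeight w p ≤ walkWeight w q

/-- `Decomposable w G k p` : `p` is the concatenation of at most `k+1` shortest paths
of `G` interleaved with at most `k` single edges. -/
inductive Decomposable (w : Sym2 V → ℝ) (G : SimpleGraph V) :
    ℕ → ∀ {a b : V}, G.Walk a b → Prop
  | single {a b : V} (k : ℕ) (p : G.Walk a b) (hp : IsShortestPath w G p) :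
      Decomposable w G k p
  | cons {a b c d : V} (k : ℕ) (p : G.Walk a b) (h : G.Adj b c) (q : G.Walk c d)
      (hp : IsShortestPath w G p) (hq : Decomposable w G k q) :
      Decomposable w G (k + 1) (p.append (Walk.cons h q))

/-- The rank of a walk `p` in `G`: the least `k` such that `p` is `k`-decomposable. -/
noncomputable def pathRank (w : Sym2 V → ℝ) (G : SimpleGraph V) {a b : V} (p : G.Walk a b) : ℕ :=
  sInf {k | Decomposable w G k p}

/-!
The prefix of `P` up to `y` is a shortest `u`–`y` path of `G − D`; since `π(u,y)` avoids `D`,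
uniqueness in `G − D` makes it equal to `π(u,y)`. Each edge of `π(u,y)` lies on `π(u,z)` for the
`D`-incident vertex `z ∈ T_u(y)` but not on the empty path `π(u,u)`, so it is in `T_induced`:
the maximal prefix contains all of `π(u,y)`, which ends with `e`. Every later edge of the prefix
is an edge of `T_u`. Arriving at `c ∈ T_u(y)`, `P` has used the edge from `c` to its parent (it
lies on `π(u,c)`), so, `P` being a path, the next tree edge leads to a child of `c`: the prefix
descends inside `T_u(y)`.
-/

theorem List.exists_getLast_takeWhile_append {α : Type*} {p : α → Bool} {l r : List α}
    (hl : ∀ a ∈ l, p a = true) (hne : l ≠ []) :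
    ∃ h : (l ++ r).takeWhile p ≠ [], ((l ++ r).takeWhile p).getLast h = l.getLast hne ∨
      ((l ++ r).takeWhile p).getLast h ∈ r.takeWhile p := by
  rw [List.takeWhile_append_of_pos hl]
  refine ⟨by simp [hne], ?_⟩
  by_cases hr : r.takeWhile p = []
  · exact .inl (by simp only [hr, List.append_nil])
  · exact .inr (List.getLast_append_of_right_ne_nil _ _ hr ▸ List.getLast_mem hr)

section

variable {G H : SimpleGraph V} {w : Sym2 V → ℝ} {a b c : V}

def UniqueShortestPaths (w : Sym2 V → ℝ) (G : SimpleGraph V) : Prop :=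
  ∀ (a b : V) (p q : G.Walk a b), IsShortestPath w G p → IsShortestPath w G q → p = q

theorem walkWeight_append (p : G.Walk a b) (q : G.Walk b c) :
    walkWeight w (p.append q) = walkWeight w p + walkWeight w q := by
  simp [walkWeight, Walk.edges_append]

theorem walkWeight_transfer (p : G.Walk a b) (hp : ∀ e ∈ p.edges, e ∈ H.edgeSet) :
    walkWeight w (p.transfer H hp) = walkWeight w p := by
  simp only [walkWeight, Walk.edges_transfer]

theorem walkWeight_bypass_le [DecidableEq V] (hw : ∀ e ∈ G.edgeSet, 0 ≤ w e) (p : G.Walk a b) :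
    walkWeight w p.bypass ≤ walkWeight w p :=
  (p.edges_bypass_sublist_edges.map w).sum_le_sum fun _ hx => by
    obtain ⟨e, he, rfl⟩ := List.mem_map.mp hx
    exact hw e (p.edges_subset_edgeSet he)

theorem IsShortestPath.weight_le [DecidableEq V] (hw : ∀ e ∈ G.edgeSet, 0 ≤ w e)
    {p : G.Walk a b} (hp : IsShortestPath w G p) (q : G.Walk a b) :
    walkWeight w p ≤ walkWeight w q :=
  (hp.2 q.bypass q.bypass_isPath).trans (walkWeight_bypass_le hw q)

theorem IsShortestPath.of_append_left [DecidableEq V] (hw : ∀ e ∈ G.edgeSet, 0 ≤ w e)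
    {p : G.Walk a b} {q : G.Walk b c} (h : IsShortestPath w G (p.append q)) :
    IsShortestPath w G p := by
  refine ⟨h.1.of_append_left, fun p' _ => ?_⟩
  have := h.weight_le hw (p'.append q)
  rw [walkWeight_append, walkWeight_append] at this
  linarith

theorem IsShortestPath.transfer (hHG : H ≤ G) {p : G.Walk a b} (hp : IsShortestPath w G p)
    (hpH : ∀ e ∈ p.edges, e ∈ H.edgeSet) : IsShortestPath w H (p.transfer H hpH) := by
  refine ⟨hp.1.transfer hpH, fun q hq => ?_⟩
  have hqG : ∀ e ∈ q.edges, e ∈ G.edgeSet := fun e he =>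
    edgeSet_mono hHG (q.edges_subset_edgeSet he)
  have := hp.2 (q.transfer G hqG) (hq.transfer hqG)
  rwa [walkWeight_transfer, ← walkWeight_transfer p hpH] at this

theorem edges_eq_append_edges_dropUntil [DecidableEq V] (hHG : H ≤ G)
    (hw : ∀ e ∈ H.edgeSet, 0 ≤ w e) (huniq : UniqueShortestPaths w H)
    {p : G.Walk a b} (hp : IsShortestPath w G p) (hpH : ∀ e ∈ p.edges, e ∈ H.edgeSet)
    {P : H.Walk a c} (hP : IsShortestPath w H P) (hb : b ∈ P.support) :
    P.edges = p.edges ++ (P.dropUntil b hb).edges := by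
  have htake : P.takeUntil b hb = p.transfer H hpH :=
    huniq a b _ _ (((P.take_spec hb).symm ▸ hP).of_append_left hw) (hp.transfer hHG hpH)
  conv_lhs => rw [← P.take_spec hb]
  rw [Walk.edges_append, htake, Walk.edges_transfer]

section ShortestPathTree

variable [DecidableEq V] {π : ∀ a b : V, G.Walk a b}

theorem eq_of_isShortestPath_append (hw : ∀ e ∈ G.edgeSet, 0 ≤ w e)
    (hπ : ∀ a b, IsShortestPath w G (π a b)) (huniq : UniqueShortestPaths w G)
    {p : G.Walk a b} {q : G.Walk b c} (h : IsShortestPath w G (p.append q)) : π a b = p :=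
  huniq a b _ _ (hπ a b) (h.of_append_left hw)

theorem edges_subset_edges_of_mem_support (hw : ∀ e ∈ G.edgeSet, 0 ≤ w e)
    (hπ : ∀ a b, IsShortestPath w G (π a b)) (huniq : UniqueShortestPaths w G)
    {u y z : V} (hy : y ∈ (π u z).support) : (π u y).edges ⊆ (π u z).edges := by
  have hpre := eq_of_isShortestPath_append hw hπ huniq (((π u z).take_spec hy).symm ▸ hπ u z)
  exact hpre ▸ (π u z).edges_takeUntil_subset_edges hy

theorem exists_treeEdge_of_mem_edges (hw : ∀ e ∈ G.edgeSet, 0 ≤ w e)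
    (hπ : ∀ a b, IsShortestPath w G (π a b)) (huniq : UniqueShortestPaths w G)
    {u : V} {p : G.Walk u b} (hp : IsShortestPath w G p) {e : Sym2 V} (he : e ∈ p.edges) :
    ∃ (c d : V) (h : G.Adj c d), e = s(c, d) ∧ π u d = (π u c).concat h := by
  suffices key : ∀ {a} (q : G.Walk u a) (r : G.Walk a b), IsShortestPath w G (q.append r) →
      ∀ e ∈ r.edges, ∃ (c d : V) (h : G.Adj c d), e = s(c, d) ∧ π u d = (π u c).concat h from
    key Walk.nil p (by rwa [Walk.nil_append]) e he
  clear he hp p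
  intro a q r hqr
  induction r with
  | nil => simp
  | @cons c d _ hcd r ih =>
    have hqr' : IsShortestPath w G ((q.concat hcd).append r) := by rwa [Walk.concat_append]
    intro e he
    rw [Walk.edges_cons, List.mem_cons] at he
    rcases he with rfl | he
    · refine ⟨c, d, hcd, rfl, ?_⟩
      rw [eq_of_isShortestPath_append hw hπ huniq hqr, eq_of_isShortestPath_append hw hπ huniq hqr']
    · exact ih (q.concat hcd) hqr' e he

theorem concat_eq_of_mem_edges_of_not_mem (hw : ∀ e ∈ G.edgeSet, 0 ≤ w e)
    (hπ : ∀ a b, IsShortestPath w G (π a b)) (huniq : UniqueShortestPaths w G)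
    {u a c d : V} (he : s(c, d) ∈ (π u a).edges) (hc : s(c, d) ∉ (π u c).edges) :
    ∃ h : G.Adj c d, π u d = (π u c).concat h := by
  obtain ⟨c', d', h, heq, htree⟩ := exists_treeEdge_of_mem_edges hw hπ huniq (hπ u a) he
  rcases Sym2.eq_iff.mp heq with ⟨rfl, rfl⟩ | ⟨rfl, rfl⟩
  · exact ⟨h, htree⟩
  · refine absurd ?_ hc
    rw [htree, Walk.edges_concat, List.concat_eq_append, Sym2.eq_swap]
    exact List.mem_append_right _ (List.mem_singleton_self _)

theorem exists_treeEdge_of_mem_takeWhile (hw : ∀ e ∈ G.edgeSet, 0 ≤ w e)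
    (hπ : ∀ a b, IsShortestPath w G (π a b)) (huniq : UniqueShortestPaths w G)
    {u y : V} {pred : Sym2 V → Bool} (hpred : ∀ e, pred e = true → ∃ a, e ∈ (π u a).edges)
    {c v : V} (Q : H.Walk c v) (hy : y ∈ (π u c).support)
    (hnd : ((π u c).edges ++ Q.edges).Nodup) :
    ∀ e ∈ Q.edges.takeWhile pred, ∃ (a b : V) (h : G.Adj a b), e = s(a, b) ∧
      π u b = (π u a).concat h ∧ y ∈ (π u a).support ∧ y ∈ (π u b).support := by
  induction Q with
  | nil => simp
  | @cons c d _ _ Q ih =>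
    intro e he
    rw [Walk.edges_cons] at he hnd
    by_cases hp : pred s(c, d) = true
    · rw [List.takeWhile_cons_of_pos hp, List.mem_cons] at he
      obtain ⟨a, ha⟩ := hpred _ hp
      have hc : s(c, d) ∉ (π u c).edges := fun h =>
        List.disjoint_of_nodup_append hnd h List.mem_cons_self
      obtain ⟨hcd, htree⟩ := concat_eq_of_mem_edges_of_not_mem hw hπ huniq ha hc
      have hy' : y ∈ (π u d).support := by
        rw [htree, Walk.support_concat]
        exact List.mem_append_left _ hy
      rcases he with rfl | he
      · exact ⟨c, d, hcd, rfl, htree, hy, hy'⟩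
      · refine ih hy' ?_ e he
        rw [htree, Walk.edges_concat, List.concat_eq_append, List.append_assoc]
        exact hnd
    · simp [List.takeWhile_cons_of_neg hp] at he

end ShortestPathTree

end

theorem stmt11_general [DecidableEq V] (G : SimpleGraph V) (w : Sym2 V → ℝ)
    (hw : ∀ e ∈ G.edgeSet, 0 < w e)
    (πG : ∀ a b : V, G.Walk a b) (hπG : ∀ a b : V, IsShortestPath w G (πG a b))
    (huniqG : ∀ (a b : V) (p q : G.Walk a b),
      IsShortestPath w G p → IsShortestPath w G q → p = q)
    (D : Set (Sym2 V))
    (huniqD : ∀ (a b : V) (p q : (G.deleteEdges D).Walk a b),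
      IsShortestPath w (G.deleteEdges D) p → IsShortestPath w (G.deleteEdges D) q → p = q)
    (u v : V)
    (P : (G.deleteEdges D).Walk u v) (hP : IsShortestPath w (G.deleteEdges D) P)
    (x y : V) (hadj : G.Adj x y)
    -- (x,y) is a tree edge of T_u with x the parent of y
    (htree : πG u y = (πG u x).concat hadj)
    -- π(u,y) contains no edge of D
    (huy : ∀ e ∈ (πG u y).edges, e ∉ D)
    -- some vertex of T_u(y) is incident to an edge of D
    (hfail : ∃ z : V, y ∈ (πG u z).support ∧ ∃ f ∈ D, z ∈ f)
    -- P traverses e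
    (heP : s(x, y) ∈ P.edges) :
    -- T_induced, as a predicate on edges
    let Tind : Sym2 V → Prop := fun e =>
      ∃ a : V, ((∃ f ∈ D, a ∈ f) ∨ a = u) ∧ ∃ b : V, ((∃ f ∈ D, b ∈ f) ∨ b = u) ∧
        Xor' (e ∈ (πG u a).edges) (e ∈ (πG u b).edges)
    -- the maximal prefix of P all of whose edges lie in T_induced
    let pre : List (Sym2 V) :=
      P.edges.takeWhile fun e => @decide (Tind e) (Classical.propDecidable _)
    ∃ hne : pre ≠ [],
      pre.getLast hne = s(x, y) ∨
      ∃ (a b : V) (hab : G.Adj a b), pre.getLast hne = s(a, b) ∧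
        πG u b = (πG u a).concat hab ∧
        y ∈ (πG u a).support ∧ y ∈ (πG u b).support := by
  intro Tind pre
  have hw₀ : ∀ e ∈ G.edgeSet, 0 ≤ w e := fun e he => (hw e he).le
  have hyP : y ∈ P.support := P.snd_mem_support_of_mem_edges heP
  have hsplit : P.edges = (πG u y).edges ++ (P.dropUntil y hyP).edges :=
    edges_eq_append_edges_dropUntil (G.deleteEdges_le D)
      (fun e he => hw₀ e (edgeSet_mono (G.deleteEdges_le D) he)) huniqD (hπG u y)
      (fun e he => edgeSet_deleteEdges D ▸ ⟨(πG u y).edges_subset_edgeSet he, huy e he⟩) hP hyP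
  have hTind_root : ∀ e, Tind e → ∃ a, e ∈ (πG u a).edges := by
    rintro e ⟨a, -, b, -, ⟨ha, -⟩ | ⟨hb, -⟩⟩
    exacts [⟨a, ha⟩, ⟨b, hb⟩]
  have hTind_uy : ∀ e ∈ (πG u y).edges, Tind e := by
    obtain ⟨z, hyz, hz⟩ := hfail
    have hnil : (πG u u).edges = [] := Walk.edges_eq_nil.mpr (Walk.isPath_iff_nil.mp (hπG u u).1)
    intro e he
    refine ⟨z, .inl hz, u, .inr rfl, .inl ⟨?_, by simp [hnil]⟩⟩
    exact edges_subset_edges_of_mem_support hw₀ hπG huniqG hyz he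
  have hne_uy : (πG u y).edges ≠ [] := by simp [htree]
  have hlast_uy : (πG u y).edges.getLast hne_uy = s(x, y) := by
    simp only [htree, Walk.edges_concat, List.concat_eq_append, List.getLast_concat]
  have hnd : ((πG u y).edges ++ (P.dropUntil y hyP).edges).Nodup := hsplit ▸ hP.1.edges_nodup
  simp only [pre, hsplit]
  obtain ⟨hne, hlast | hmem⟩ :=
    List.exists_getLast_takeWhile_append (r := (P.dropUntil y hyP).edges)
      (fun e he => @decide_eq_true _ (Classical.propDecidable _) (hTind_uy e he)) hne_uy
  · exact ⟨hne, .inl (hlast.trans hlast_uy)⟩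
  · exact ⟨hne, .inr (exists_treeEdge_of_mem_takeWhile hw₀ hπG huniqG
      (fun e he => hTind_root e (@of_decide_eq_true _ (Classical.propDecidable _) he))
      (P.dropUntil y hyP) (πG u y).end_mem_support hnd _ hmem)⟩

/-- Case 2.6.  Let `e = (x,y)` be a tree edge of `T_u` with `x` the
parent of `y`, such that `π(u,y)` contains no edge of `D` and some vertex of `T_u(y)` is
incident to an edge of `D`.  If `P = π_{G−D}(u,v)` traverses `e`, then the maximal prefix
of `P` all of whose edges lie in `T_induced` is nonempty, and its last edge `e_Δ` is either
`e` itself or an edge of `T_u` both of whose endpoints belong to `T_u(y)`.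

Here `T_induced` is the set of edges of `T_u` lying on the `T_u`-path between some pair of
vertices of `V(D) ∪ {u}`; since `T_u` is rooted at `u`, an edge lies on the tree path
between `a` and `b` iff it lies on exactly one of the root paths `π(u,a)`, `π(u,b)`. -/
theorem stmt11 [Fintype V] [DecidableEq V] (G : SimpleGraph V) (w : Sym2 V → ℝ)
    (hw : ∀ e ∈ G.edgeSet, 0 < w e)
    (πG : ∀ a b : V, G.Walk a b) (hπG : ∀ a b : V, IsShortestPath w G (πG a b))
    (huniqG : ∀ (a b : V) (p q : G.Walk a b),
      IsShortestPath w G p → IsShortestPath w G q → p = q)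
    (D : Set (Sym2 V)) (hDsub : D ⊆ G.edgeSet)
    (huniqD : ∀ (a b : V) (p q : (G.deleteEdges D).Walk a b),
      IsShortestPath w (G.deleteEdges D) p → IsShortestPath w (G.deleteEdges D) q → p = q)
    (u v : V)
    (P : (G.deleteEdges D).Walk u v) (hP : IsShortestPath w (G.deleteEdges D) P)
    (x y : V) (hadj : G.Adj x y)
    -- (x,y) is a tree edge of T_u with x the parent of y
    (htree : πG u y = (πG u x).concat hadj)
    -- π(u,y) contains no edge of D
    (huy : ∀ e ∈ (πG u y).edges, e ∉ D)
    -- some vertex of T_u(y) is incident to an edge of D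
    (hfail : ∃ z : V, y ∈ (πG u z).support ∧ ∃ f ∈ D, z ∈ f)
    -- P traverses e
    (heP : s(x, y) ∈ P.edges) :
    -- T_induced, as a predicate on edges
    let Tind : Sym2 V → Prop := fun e =>
      ∃ a : V, ((∃ f ∈ D, a ∈ f) ∨ a = u) ∧ ∃ b : V, ((∃ f ∈ D, b ∈ f) ∨ b = u) ∧
        Xor' (e ∈ (πG u a).edges) (e ∈ (πG u b).edges)
    -- the maximal prefix of P all of whose edges lie in T_induced
    let pre : List (Sym2 V) :=
      P.edges.takeWhile fun e => @decide (Tind e) (Classical.propDecidable _)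
    ∃ hne : pre ≠ [],
      pre.getLast hne = s(x, y) ∨
      ∃ (a b : V) (hab : G.Adj a b), pre.getLast hne = s(a, b) ∧
        πG u b = (πG u a).concat hab ∧
        y ∈ (πG u a).support ∧ y ∈ (πG u b).support :=
  stmt11_general G w hw πG hπG huniqG D huniqD u v P hP x y hadj htree huy hfail heP
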